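/- arXiv:1406.0935 — 2 statements merged into one kernel-verified Lean document; each statement's English description precedes it below -/
import Mathlib

section
/- Let d ≥ 2. Assume that the operators X_i satisfy X_i∘X_{−i} = Id on ⟨B⟩_{≤d−2} for every 1 ≤ i ≤ n, and X_i∘X_j = X_j∘X_i on ⟨B⟩_{≤d−2} for every 1 ≤ i < j ≤ n. Then for every monomial m with δ(m) ≤ d one has m − σ(m) ∈ ⟨F·⟩_{≤d}; consequently ker σ ⊆ ⟨F·⟩_{≤d}. -/
open scoped BigOperators

noncomputable section

namespace ToricBorderBasis

/-- Exponent vectors of Laurent monomials in `n` variables. -/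
abbrev Exp (n : ℕ) := Fin n → ℤ

/-- The ring `S = k[x₁^{±1},…,xₙ^{±1}]` of Laurent polynomials,
realized as the monoid algebra of `ℤⁿ` over `k`. -/
abbrev LaurentS (n : ℕ) (k : Type*) [Field k] : Type _ := AddMonoidAlgebra k (Exp n)

variable {k : Type*} [Field k] {n : ℕ}

/-- Degree `δ(x^α) = |α₁| + ⋯ + |αₙ|` of a monomial. -/
def edeg {n : ℕ} (α : Exp n) : ℕ := ∑ i, (α i).natAbs

/-- The monomial `x^α`. -/
def mono (k : Type*) [Field k] {n : ℕ} (α : Exp n) : LaurentS n k :=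
  AddMonoidAlgebra.ofCoeff (Finsupp.single α 1)

/-- Degree of a Laurent polynomial: max degree of a monomial in its support
(`0` for the zero polynomial). -/
def pdeg (p : LaurentS n k) : ℕ := (p.coeff : Exp n →₀ k).support.sup edeg

/-- Exponent of the variable `x_i` (if `s = true`) or of `x_i⁻¹` (if `s = false`);
a pair `(i, s)` encodes a signed index in `[−n,n]*`. -/
def expOf (n : ℕ) (i : Fin n) (s : Bool) : Exp n :=
  Pi.single i (if s then 1 else -1)

/-- The variable `x_i` resp. its inverse `x_i⁻¹`. -/
def varX (k : Type*) [Field k] {n : ℕ} (i : Fin n) (s : Bool) : LaurentS n k :=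
  mono k (expOf n i s)

/-- Prolongation `B^× = B ∪ ⋃_{i∈[−n,n]*} x_i B` (on exponents). -/
def Bx {n : ℕ} (B : Set (Exp n)) : Set (Exp n) :=
  B ∪ {β | ∃ i s, ∃ α ∈ B, β = expOf n i s + α}

/-- Border `∂B = B^× \ B`. -/
def bord {n : ℕ} (B : Set (Exp n)) : Set (Exp n) := Bx B \ B

/-- `B` is connected to `1`. -/
def ConnectedToOne {n : ℕ} (B : Set (Exp n)) : Prop :=
  (0 : Exp n) ∈ B ∧ ∀ α ∈ B, α ≠ 0 →
    ∃ i s, ∃ α' ∈ B, α = expOf n i s + α' ∧ edeg α' < edeg α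

/-- `⟨A⟩_{≤d}`: the `k`-span of the monomials with exponent in `A` and degree `≤ d`. -/
def spanMonLE (k : Type*) [Field k] {n : ℕ} (A : Set (Exp n)) (d : ℕ) :
    Submodule k (LaurentS n k) :=
  Submodule.span k {p | ∃ α ∈ A, edeg α ≤ d ∧ p = mono k α}

/-- `⟨A⟩`: the `k`-span of all monomials with exponent in `A`. -/
def spanMon (k : Type*) [Field k] {n : ℕ} (A : Set (Exp n)) :
    Submodule k (LaurentS n k) :=
  Submodule.span k {p | ∃ α ∈ A, p = mono k α}

/-- The multiplication operator `X_i : b ↦ π(x_i b)` associated to a projection `π`. -/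
def Xop (π : LaurentS n k →ₗ[k] LaurentS n k) (i : Fin n) (s : Bool) :
    LaurentS n k →ₗ[k] LaurentS n k :=
  π ∘ₗ LinearMap.mulLeft k (varX k i s)

/-- `X_i^{a}` for `a ∈ ℤ`: iterate `X_i` if `a ≥ 0` and `X_{−i}` if `a < 0`. -/
def Xpow (π : LaurentS n k →ₗ[k] LaurentS n k) (i : Fin n) (a : ℤ) :
    Module.End k (LaurentS n k) :=
  if 0 ≤ a then (Xop π i true : Module.End k (LaurentS n k)) ^ a.toNat
  else (Xop π i false : Module.End k (LaurentS n k)) ^ (-a).toNat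

/-- `X^α = X₁^{α₁} ∘ ⋯ ∘ Xₙ^{αₙ}`. -/
def Xmon (π : LaurentS n k →ₗ[k] LaurentS n k) (α : Exp n) :
    Module.End k (LaurentS n k) :=
  (List.ofFn fun i => Xpow π i (α i)).prod

/-- `σ(p) = p(X)(1)`, extended linearly from monomials. -/
def sigma (π : LaurentS n k →ₗ[k] LaurentS n k) (p : LaurentS n k) : LaurentS n k :=
  (p.coeff : Exp n →₀ k).sum fun α c => c • (Xmon π α (1 : LaurentS n k))

/-- The rewriting family `F` for `π` in degree `≤ d`:
the polynomials `x^β − π(x^β)` for `x^β ∈ (∂B)_{≤d}`. -/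
def rewFam (π : LaurentS n k →ₗ[k] LaurentS n k) (B : Set (Exp n)) (d : ℕ) :
    Set (LaurentS n k) :=
  {f | ∃ β ∈ bord B, edeg β ≤ d ∧ f = mono k β - π (mono k β)}

/-- `⟨F·⟩_{≤d}`: the `k`-span of the products `m·f`, `m` a monomial, `f ∈ F`,
`δ(m·f) ≤ d`. -/
def multSpanLE (k : Type*) [Field k] {n : ℕ} (F : Set (LaurentS n k)) (d : ℕ) :
    Submodule k (LaurentS n k) :=
  Submodule.span k {q | (∃ α : Exp n, ∃ f ∈ F, q = mono k α * f) ∧ pdeg q ≤ d}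

/-- Prolongation polynomials `C¹_B(F)`: the `x_i f` lying in `⟨B^×⟩`. -/
def comSet1 (B : Set (Exp n)) (F : Set (LaurentS n k)) : Set (LaurentS n k) :=
  {p | (∃ i s, ∃ f ∈ F, p = varX k i s * f) ∧ p ∈ spanMon k (Bx B)}

/-- Commutation polynomials `C²_B(F)`: the `x_i f − x_j f′` (`i ≠ j`) lying in `⟨B^×⟩`. -/
def comSet2 (B : Set (Exp n)) (F : Set (LaurentS n k)) : Set (LaurentS n k) :=
  {p | (∃ i s j t, (i, s) ≠ (j, t) ∧ ∃ f ∈ F, ∃ f' ∈ F,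
        p = varX k i s * f - varX k j t * f') ∧ p ∈ spanMon k (Bx B)}

/-- `C_B(F) = C¹_B(F) ∪ C²_B(F)`. -/
def comSet (B : Set (Exp n)) (F : Set (LaurentS n k)) : Set (LaurentS n k) :=
  comSet1 B F ∪ comSet2 B F

/-- `π` is a degree-compatible projection from `⟨B^×⟩_{≤d}` onto `⟨B⟩_{≤d}`
(encoded as a global linear map with the required restriction properties). -/
def IsProjLE (π : LaurentS n k →ₗ[k] LaurentS n k) (B : Set (Exp n)) (d : ℕ) : Prop :=
  (∀ p ∈ spanMonLE k (Bx B) d, π p ∈ spanMonLE k B d) ∧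
  (∀ p ∈ spanMonLE k B d, π p = p) ∧
  (∀ p ∈ spanMonLE k (Bx B) d, pdeg (π p) ≤ pdeg p)

/-- Inversion relations: `X_i ∘ X_{−i} = Id` on `⟨B⟩_{≤e}` for `1 ≤ i ≤ n`. -/
def InvRel (π : LaurentS n k →ₗ[k] LaurentS n k) (B : Set (Exp n)) (e : ℕ) : Prop :=
  ∀ i : Fin n, ∀ b ∈ spanMonLE k B e, Xop π i true (Xop π i false b) = b

/-- Commutation relations: `X_i ∘ X_j = X_j ∘ X_i` on `⟨B⟩_{≤e}` for `1 ≤ i < j ≤ n`. -/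
def CommRel (π : LaurentS n k →ₗ[k] LaurentS n k) (B : Set (Exp n)) (e : ℕ) : Prop :=
  ∀ i j : Fin n, i < j → ∀ b ∈ spanMonLE k B e,
    Xop π i true (Xop π j true b) = Xop π j true (Xop π i true b)

end ToricBorderBasis

namespace ToricBorderBasis

/-!
Spell a monomial `m = x^α` as a word `x_{i₁} ⋯ x_{i_k}` in the variables and their inverses,
so that `σ(m) = X_{i₁} ⋯ X_{i_k}(1)`. Then `m − σ(m)` telescopes into
`∑ⱼ x_{i₁} ⋯ x_{i_{j-1}} · (x_{iⱼ} bⱼ − π(x_{iⱼ} bⱼ))` with `bⱼ = X_{i_{j+1}} ⋯ X_{i_k}(1) ∈ ⟨B⟩_{≤k−j}`.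
For a monomial `b ∈ B`, `x_i b − π(x_i b)` is either `0` (when `x_i b ∈ B`, which `π` fixes) or
an element of `F` (when `x_i b ∈ ∂B`), and degree compatibility of `π` keeps every product in
degree `≤ d`. The statement about `ker σ` follows by linearity of `σ`.
-/

section

variable {k : Type*} [Field k] {n : ℕ}

section Degree

lemma edeg_add_le (α β : Exp n) : edeg (α + β) ≤ edeg α + edeg β := by
  simp only [edeg, Pi.add_apply, ← Finset.sum_add_distrib]
  exact Finset.sum_le_sum fun i _ => Int.natAbs_add_le _ _

lemma edeg_expOf (i : Fin n) (s : Bool) : edeg (expOf n i s) = 1 := by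
  rw [edeg, Finset.sum_eq_single i (fun j _ hj => by simp [expOf, hj]) (by simp)]
  cases s <;> simp [expOf]

lemma edeg_expOf_add_le (i : Fin n) (s : Bool) (β : Exp n) :
    edeg (expOf n i s + β) ≤ edeg β + 1 := by
  have := edeg_add_le (expOf n i s) β
  rw [edeg_expOf] at this
  omega

lemma edeg_zero : edeg (0 : Exp n) = 0 := by simp [edeg]

lemma mono_eq_single (α : Exp n) : mono k α = AddMonoidAlgebra.single α 1 := rfl

lemma mono_zero : mono k (0 : Exp n) = 1 := rfl

lemma mono_add (α β : Exp n) : mono k (α + β) = mono k α * mono k β := by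
  simp [mono_eq_single]

lemma pdeg_le_iff {p : LaurentS n k} {e : ℕ} :
    pdeg p ≤ e ↔ ∀ β ∈ p.coeff.support, edeg β ≤ e := Finset.sup_le_iff

lemma pdeg_mono (α : Exp n) : pdeg (mono k α) = edeg α := by
  simp [pdeg, mono]

lemma pdeg_sub_le (p q : LaurentS n k) : pdeg (p - q) ≤ max (pdeg p) (pdeg q) := by
  classical
  refine pdeg_le_iff.2 fun β hβ => ?_
  rw [AddMonoidAlgebra.coeff_sub] at hβ
  rcases Finset.mem_union.1 (Finsupp.support_sub hβ) with h | h
  · exact le_max_of_le_left (Finset.le_sup h)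
  · exact le_max_of_le_right (Finset.le_sup h)

lemma pdeg_mono_mul_le (μ : Exp n) (q : LaurentS n k) :
    pdeg (mono k μ * q) ≤ edeg μ + pdeg q := by
  classical
  refine pdeg_le_iff.2 fun β hβ => ?_
  obtain ⟨γ, hγ, rfl⟩ := Finset.mem_image.1 <|
    AddMonoidAlgebra.support_coeff_single_mul_subset q 1 μ hβ
  exact (edeg_add_le μ γ).trans (Nat.add_le_add_left (Finset.le_sup hγ) _)

lemma mem_spanMonLE_iff {A : Set (Exp n)} {e : ℕ} {p : LaurentS n k} :
    p ∈ spanMonLE k A e ↔ ∀ β ∈ p.coeff.support, β ∈ A ∧ edeg β ≤ e := by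
  have : spanMonLE k A e = AddMonoidAlgebra.supported k k {α | α ∈ A ∧ edeg α ≤ e} := by
    rw [AddMonoidAlgebra.supported_eq_span_single, spanMonLE]
    congr 1
    ext p
    simp [mono_eq_single, eq_comm, and_assoc]
  rw [this, AddMonoidAlgebra.mem_supported]
  exact ⟨fun h β hβ => h hβ, fun h β hβ => h β hβ⟩

lemma pdeg_le_of_mem_spanMonLE {A : Set (Exp n)} {e : ℕ} {p : LaurentS n k}
    (hp : p ∈ spanMonLE k A e) : pdeg p ≤ e :=
  pdeg_le_iff.2 fun β hβ => (mem_spanMonLE_iff.1 hp β hβ).2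

lemma mem_spanMonLE_of_pdeg_le {A : Set (Exp n)} {d e : ℕ} {p : LaurentS n k}
    (hp : p ∈ spanMonLE k A d) (he : pdeg p ≤ e) : p ∈ spanMonLE k A e :=
  mem_spanMonLE_iff.2 fun β hβ => ⟨(mem_spanMonLE_iff.1 hp β hβ).1, pdeg_le_iff.1 he β hβ⟩

lemma spanMonLE_mono {A A' : Set (Exp n)} {e e' : ℕ} (hA : A ⊆ A') (he : e ≤ e') :
    spanMonLE k A e ≤ spanMonLE k A' e' :=
  Submodule.span_mono fun _ ⟨α, hα, hαe, hp⟩ => ⟨α, hA hα, hαe.trans he, hp⟩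

end Degree

section Projection

variable {π : LaurentS n k →ₗ[k] LaurentS n k} {B : Set (Exp n)} {d : ℕ}

lemma varX_mul_mem_spanMonLE_Bx (i : Fin n) (s : Bool) {e : ℕ} {b : LaurentS n k}
    (hb : b ∈ spanMonLE k B e) : varX k i s * b ∈ spanMonLE k (Bx B) (e + 1) := by
  refine (Submodule.span_le.2 ?_ : spanMonLE k B e ≤
    (spanMonLE k (Bx B) (e + 1)).comap (LinearMap.mulLeft k (varX k i s))) hb
  rintro _ ⟨β, hβ, hβe, rfl⟩
  refine Submodule.subset_span ⟨expOf n i s + β, Or.inr ⟨i, s, β, hβ, rfl⟩, ?_, ?_⟩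
  · exact (edeg_expOf_add_le i s β).trans (by omega)
  · exact (mono_add _ _).symm

lemma Xop_mem_spanMonLE (hπ : IsProjLE π B d) (i : Fin n) (s : Bool) {e : ℕ}
    (he : e + 1 ≤ d) {b : LaurentS n k} (hb : b ∈ spanMonLE k B e) :
    Xop π i s b ∈ spanMonLE k B (e + 1) := by
  have hxb := varX_mul_mem_spanMonLE_Bx i s hb
  have hxb_d := spanMonLE_mono subset_rfl he hxb
  exact mem_spanMonLE_of_pdeg_le (hπ.1 _ hxb_d)
    ((hπ.2.2 _ hxb_d).trans (pdeg_le_of_mem_spanMonLE hxb))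

lemma mono_mul_sub_Xop_mono_mem (hπ : IsProjLE π B d) (i : Fin n) (s : Bool)
    {μ β : Exp n} (hβ : β ∈ B) (hdeg : edeg μ + edeg β + 1 ≤ d) :
    mono k μ * (varX k i s * mono k β - Xop π i s (mono k β)) ∈
      multSpanLE k (rewFam π B d) d := by
  have hγ_deg := edeg_expOf_add_le i s β
  set γ := expOf n i s + β
  have hxβ : varX k i s * mono k β = mono k γ := (mono_add _ _).symm
  have hXop : Xop π i s (mono k β) = π (mono k γ) := congrArg π hxβ
  rw [hXop, hxβ]
  by_cases hγB : γ ∈ B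
  · rw [hπ.2.1 _ (Submodule.subset_span ⟨γ, hγB, by omega, rfl⟩), sub_self, mul_zero]
    exact Submodule.zero_mem _
  · have hγ_mem : mono k γ ∈ spanMonLE k (Bx B) d :=
      Submodule.subset_span ⟨γ, Or.inr ⟨i, s, β, hβ, rfl⟩, by omega, rfl⟩
    have hf : mono k γ - π (mono k γ) ∈ rewFam π B d :=
      ⟨γ, ⟨Or.inr ⟨i, s, β, hβ, rfl⟩, hγB⟩, by omega, rfl⟩
    have hf_deg : pdeg (mono k γ - π (mono k γ)) ≤ edeg γ := by
      refine (pdeg_sub_le _ _).trans (max_le (pdeg_mono γ).le ?_)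
      exact (hπ.2.2 _ hγ_mem).trans (pdeg_mono γ).le
    refine Submodule.subset_span ⟨⟨μ, _, hf, rfl⟩, ?_⟩
    have := pdeg_mono_mul_le μ (mono k γ - π (mono k γ))
    omega

lemma mono_mul_sub_Xop_mem (hπ : IsProjLE π B d) (i : Fin n) (s : Bool) {μ : Exp n} {e : ℕ}
    (he : edeg μ + e + 1 ≤ d) {b : LaurentS n k} (hb : b ∈ spanMonLE k B e) :
    mono k μ * (varX k i s * b - Xop π i s b) ∈ multSpanLE k (rewFam π B d) d := by
  let L : LaurentS n k →ₗ[k] LaurentS n k :=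
    LinearMap.mulLeft k (mono k μ) ∘ₗ (LinearMap.mulLeft k (varX k i s) - Xop π i s)
  refine (Submodule.span_le.2 ?_ : spanMonLE k B e ≤ (multSpanLE k (rewFam π B d) d).comap L) hb
  rintro _ ⟨β, hβ, hβe, rfl⟩
  exact mono_mul_sub_Xop_mono_mem hπ i s hβ (by omega)

end Projection

section Word

variable {π : LaurentS n k →ₗ[k] LaurentS n k} {B : Set (Exp n)} {d : ℕ}

abbrev Word (n : ℕ) := List (Fin n × Bool)

def wordExp (w : Word n) : Exp n := (w.map fun p => expOf n p.1 p.2).sum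

variable (π) in
def wordOp (w : Word n) : Module.End k (LaurentS n k) :=
  (w.map fun p => (Xop π p.1 p.2 : Module.End k (LaurentS n k))).prod

def word (α : Exp n) : Word n :=
  (List.ofFn fun i => List.replicate (α i).natAbs (i, decide (0 ≤ α i))).flatten

lemma length_word (α : Exp n) : (word α).length = edeg α := by
  simp [word, edeg, List.sum_ofFn]

lemma wordExp_word (α : Exp n) : wordExp (word α) = α := by
  simp only [wordExp, word, List.map_flatten, List.sum_flatten, List.map_ofFn, List.sum_ofFn,
    Function.comp_def, List.map_replicate, List.sum_replicate]
  ext j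
  rw [Finset.sum_apply, Finset.sum_eq_single j (fun i _ hij => by simp [expOf, hij]) (by simp)]
  rcases le_or_gt 0 (α j) with h | h
  · simp [expOf, h]
  · simp [expOf, h.not_ge, abs_of_neg h]

lemma Xpow_eq_pow (i : Fin n) (a : ℤ) :
    Xpow π i a = (Xop π i (decide (0 ≤ a)) : Module.End k (LaurentS n k)) ^ a.natAbs := by
  unfold Xpow
  split_ifs with h <;> simp [h] <;> congr 1 <;> omega

lemma Xmon_eq_wordOp_word (α : Exp n) : Xmon π α = wordOp π (word α) := by
  simp [Xmon, wordOp, word, List.map_flatten, List.prod_flatten, List.map_ofFn, Function.comp_def,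
    List.map_replicate, List.prod_replicate, Xpow_eq_pow]

lemma wordOp_one_mem_spanMonLE (hπ : IsProjLE π B d) (hB0 : (0 : Exp n) ∈ B) :
    ∀ w : Word n, w.length ≤ d → wordOp π w 1 ∈ spanMonLE k B w.length
  | [], _ => Submodule.subset_span ⟨0, hB0, edeg_zero.le, mono_zero.symm⟩
  | p :: w, hw => by
    have hw' : w.length + 1 ≤ d := by simpa using hw
    simpa [wordOp] using
      Xop_mem_spanMonLE hπ p.1 p.2 hw' (wordOp_one_mem_spanMonLE hπ hB0 w (by omega))

lemma mono_mul_sub_wordOp_one_mem (hπ : IsProjLE π B d) (hB0 : (0 : Exp n) ∈ B) :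
    ∀ (w : Word n) (μ : Exp n), edeg μ + w.length ≤ d →
      mono k μ * (mono k (wordExp w) - wordOp π w 1) ∈ multSpanLE k (rewFam π B d) d
  | [], μ, _ => by simp [wordExp, wordOp, mono_zero]
  | p :: w, μ, hμ => by
    have hμ' : edeg μ + w.length + 1 ≤ d := by simpa [add_assoc] using hμ
    have hstep := mono_mul_sub_Xop_mem hπ p.1 p.2 hμ' (wordOp_one_mem_spanMonLE hπ hB0 w (by omega))
    have hrest := mono_mul_sub_wordOp_one_mem hπ hB0 w (expOf n p.1 p.2 + μ) (by
      have := edeg_expOf_add_le p.1 p.2 μ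
      omega)
    have htelescope : mono k μ * (mono k (wordExp (p :: w)) - wordOp π (p :: w) 1) =
        mono k (expOf n p.1 p.2 + μ) * (mono k (wordExp w) - wordOp π w 1) +
          mono k μ * (varX k p.1 p.2 * wordOp π w 1 - Xop π p.1 p.2 (wordOp π w 1)) := by
      simp only [wordExp, wordOp, List.map_cons, List.sum_cons, List.prod_cons,
        Module.End.mul_apply, mono_add, varX]
      ring
    rw [htelescope]
    exact add_mem hrest hstep

lemma sigma_mono (α : Exp n) : sigma π (mono k α) = Xmon π α 1 := by
  simp [sigma, mono]

lemma sub_sigma_eq_sum (p : LaurentS n k) :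
    p - sigma π p = p.coeff.sum fun β c => c • (mono k β - sigma π (mono k β)) := by
  simp only [smul_sub, Finsupp.sum_sub, sigma_mono]
  congr 1
  conv_lhs => rw [← AddMonoidAlgebra.sum_coeff_single p]
  simp [mono_eq_single]

lemma mono_sub_sigma_mono_mem (hπ : IsProjLE π B d) (hB0 : (0 : Exp n) ∈ B) {α : Exp n}
    (hα : edeg α ≤ d) : mono k α - sigma π (mono k α) ∈ multSpanLE k (rewFam π B d) d := by
  simpa [wordExp_word, sigma_mono, Xmon_eq_wordOp_word, mono_zero] using
    mono_mul_sub_wordOp_one_mem hπ hB0 (word α) 0 (by rw [length_word, edeg_zero]; omega)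

lemma sub_sigma_mem (hπ : IsProjLE π B d) (hB0 : (0 : Exp n) ∈ B) {p : LaurentS n k}
    (hp : pdeg p ≤ d) : p - sigma π p ∈ multSpanLE k (rewFam π B d) d := by
  rw [sub_sigma_eq_sum]
  exact Submodule.finsuppSum_mem _ _ _ _ fun β hβ => Submodule.smul_mem _ _ <|
    mono_sub_sigma_mono_mem hπ hB0 (pdeg_le_iff.1 hp β (Finsupp.mem_support_iff.2 hβ))

end Word

end

theorem statement_5_general {n : ℕ} {k : Type*} [Field k] (d : ℕ)
    (B : Set (Exp n)) (hB1 : ConnectedToOne B)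
    (π : LaurentS n k →ₗ[k] LaurentS n k) (hπ : IsProjLE π B d) :
    (∀ α : Exp n, edeg α ≤ d →
      mono k α - sigma π (mono k α) ∈ multSpanLE k (rewFam π B d) d) ∧
    (∀ p : LaurentS n k, pdeg p ≤ d → sigma π p = 0 →
      p ∈ multSpanLE k (rewFam π B d) d) :=
  ⟨fun _ hα => mono_sub_sigma_mono_mem hπ hB1.1 hα,
    fun p hp hσ => by simpa [hσ] using sub_sigma_mem hπ hB1.1 hp⟩

/-- Under the inversion and commutation relations on `⟨B⟩_{≤d−2}`,
every monomial `m` with `δ(m) ≤ d` satisfies `m − σ(m) ∈ ⟨F·⟩_{≤d}`; consequently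
`ker σ ⊆ ⟨F·⟩_{≤d}`. -/
theorem statement_5 {n : ℕ} {k : Type*} [Field k] (d : ℕ) (hd : 2 ≤ d)
    (B : Set (Exp n)) (hBfin : B.Finite) (hB1 : ConnectedToOne B)
    (π : LaurentS n k →ₗ[k] LaurentS n k) (hπ : IsProjLE π B d)
    (hinv : InvRel π B (d - 2)) (hcomm : CommRel π B (d - 2)) :
    (∀ α : Exp n, edeg α ≤ d →
      mono k α - sigma π (mono k α) ∈ multSpanLE k (rewFam π B d) d) ∧
    (∀ p : LaurentS n k, pdeg p ≤ d → sigma π p = 0 →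
      p ∈ multSpanLE k (rewFam π B d) d) :=
  statement_5_general d B hB1 π hπ

end ToricBorderBasis
end
end

section
/- For all i ≠ j ∈ [−n,n]* and every m ∈ B, the element φ_{i,j}(m) = x_i Y_j[m] − x_j Y_i[m] − Y_j[X_i(m)] + Y_i[X_j(m)] of S₁ lies in the kernel of ∂₁. -/
open scoped BigOperators

noncomputable section

namespace ToricBorderBasis

variable {k : Type*} [Field k] {n : ℕ}

/-- `π` is a projection from `⟨B^×⟩` onto `⟨B⟩`. -/
def IsProj (π : LaurentS n k →ₗ[k] LaurentS n k) (B : Set (Exp n)) : Prop :=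
  (∀ p ∈ spanMon k (Bx B), π p ∈ spanMon k B) ∧ (∀ p ∈ spanMon k B, π p = p)

/-- The operators `X_i`, `i ∈ [−n,n]*`, pairwise commute on `⟨B⟩`. -/
def CommRelAll (π : LaurentS n k →ₗ[k] LaurentS n k) (B : Set (Exp n)) : Prop :=
  ∀ (i : Fin n) (s : Bool) (j : Fin n) (t : Bool), ∀ b ∈ spanMon k B,
    Xop π i s (Xop π j t b) = Xop π j t (Xop π i s b)

/-- `X_i ∘ X_{−i} = Id` on `⟨B⟩` for every `i ∈ [−n,n]*`. -/
def InvRelAll (π : LaurentS n k →ₗ[k] LaurentS n k) (B : Set (Exp n)) : Prop :=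
  ∀ (i : Fin n) (s : Bool), ∀ b ∈ spanMon k B, Xop π i s (Xop π i (!s) b) = b

/-- The rewriting family `F = {x^β − π(x^β) : x^β ∈ ∂B}`. -/
def rewFamAll (π : LaurentS n k →ₗ[k] LaurentS n k) (B : Set (Exp n)) :
    Set (LaurentS n k) :=
  {f | ∃ β ∈ bord B, f = mono k β - π (mono k β)}

/-- Indices of the basis `Y_i[m]` of the free module `S₁`:
pairs of a signed index `(i,s)` and `m ∈ B` with `x_i m ∉ B`. -/
def GoodIdx (n : ℕ) (B : Set (Exp n)) : Type :=
  {q : (Fin n × Bool) × Exp n // q.2 ∈ B ∧ expOf n q.1.1 q.1.2 + q.2 ∉ B}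

/-- The free `S`-module `S₁` with basis the `Y_i[m]`, `m ∈ B`, `x_i m ∉ B`. -/
abbrev S1 (n : ℕ) (k : Type*) [Field k] (B : Set (Exp n)) : Type _ :=
  GoodIdx n B →₀ LaurentS n k

open Classical in
/-- The basis element `Y_i[m]`, with the convention `Y_i[m] = 0` if `x_i m ∈ B`. -/
def Ysym (k : Type*) [Field k] {n : ℕ} (B : Set (Exp n)) (i : Fin n) (s : Bool)
    (m : Exp n) : S1 n k B :=
  if h : m ∈ B ∧ expOf n i s + m ∉ B then Finsupp.single ⟨((i, s), m), h⟩ 1 else 0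

/-- `k`-linear extension `b ↦ Y_i[b]` for `b ∈ ⟨B⟩`. -/
def YsymL (k : Type*) [Field k] {n : ℕ} (B : Set (Exp n)) (i : Fin n) (s : Bool)
    (b : LaurentS n k) : S1 n k B :=
  (b.coeff : Exp n →₀ k).sum fun m c => c • Ysym k B i s m

/-- `ψ_i(m) = x_i m − π(x_i m)` for a monomial `m`. -/
def psiMono (π : LaurentS n k →ₗ[k] LaurentS n k) (i : Fin n) (s : Bool)
    (m : Exp n) : LaurentS n k :=
  mono k (expOf n i s + m) - π (mono k (expOf n i s + m))

/-- The `S`-module map `∂₁ : S₁ → S`, `Y_i[m] ↦ ψ_i(m)`. -/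
def partial1 (π : LaurentS n k →ₗ[k] LaurentS n k) (B : Set (Exp n)) :
    S1 n k B →ₗ[LaurentS n k] LaurentS n k :=
  Finsupp.lsum (LaurentS n k) fun q =>
    LinearMap.toSpanSingleton (LaurentS n k) (LaurentS n k)
      (psiMono π q.1.1.1 q.1.1.2 q.1.2)

/-- `φ_{i,j}(m) = x_i Y_j[m] − x_j Y_i[m] − Y_j[X_i(m)] + Y_i[X_j(m)]`. -/
def phiEl (π : LaurentS n k →ₗ[k] LaurentS n k) (B : Set (Exp n))
    (i : Fin n) (s : Bool) (j : Fin n) (t : Bool) (m : Exp n) : S1 n k B :=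
  varX k i s • Ysym k B j t m - varX k j t • Ysym k B i s m
    - YsymL k B j t (Xop π i s (mono k m)) + YsymL k B i s (Xop π j t (mono k m))

/-- `ρ_i(m) = x_i Y_{−i}[m] + Y_i[X_{−i}(m)]`. -/
def rhoEl (π : LaurentS n k →ₗ[k] LaurentS n k) (B : Set (Exp n))
    (i : Fin n) (s : Bool) (m : Exp n) : S1 n k B :=
  varX k i s • Ysym k B i (!s) m + YsymL k B i s (Xop π i (!s) (mono k m))

/-- The `S`-submodule `K₁ ⊆ S₁` generated by the `ρ_i(m)` and `φ_{i,j}(m)`, `m ∈ B`. -/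
def K1 (π : LaurentS n k →ₗ[k] LaurentS n k) (B : Set (Exp n)) :
    Submodule (LaurentS n k) (S1 n k B) :=
  Submodule.span (LaurentS n k)
    ({u | ∃ i s m, m ∈ B ∧ u = rhoEl π B i s m} ∪
     {u | ∃ i s j t m, ((i, s) : Fin n × Bool) ≠ (j, t) ∧ m ∈ B ∧ u = phiEl π B i s j t m})

/-- `X_{i₁} ∘ ⋯ ∘ X_{i_k}` for a sequence of signed indices. -/
def Xcomp (π : LaurentS n k →ₗ[k] LaurentS n k) :
    List (Fin n × Bool) → LaurentS n k →ₗ[k] LaurentS n k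
  | [] => LinearMap.id
  | q :: L => (Xop π q.1 q.2) ∘ₗ Xcomp π L

/-- `Ψ_{i₁,…,i_k} = Σ_{l=1}^{k} x_{i₁}⋯x_{i_{l−1}} Y_{i_l}[X_{i_{l+1}} ∘ ⋯ ∘ X_{i_k}(1)]`. -/
def Psi (π : LaurentS n k →ₗ[k] LaurentS n k) (B : Set (Exp n)) :
    List (Fin n × Bool) → S1 n k B
  | [] => 0
  | q :: L => YsymL k B q.1 q.2 (Xcomp π L 1) + varX k q.1 q.2 • Psi π B L

/-- Degree on `S₁`: max over the nonzero terms `m₁ Y_i[m₂]` of `δ(m₁)`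
(`⊥` for the zero element). -/
def s1deg {B : Set (Exp n)} (u : S1 n k B) : WithBot ℕ :=
  u.support.sup fun q => (pdeg (u q) : WithBot ℕ)

end ToricBorderBasis

/-! Applying `∂₁` to `Y_j[b]` for `b ∈ ⟨B⟩` gives `x_j b − X_j(b)`, so `∂₁ φ_{i,j}(m)` telescopes
to `X_j(X_i(m)) − X_i(X_j(m))`, which vanishes because the multiplication operators commute. -/

namespace ToricBorderBasis

section

variable {k : Type*} [Field k] {n : ℕ}

lemma varX_mul_mono (i : Fin n) (s : Bool) (α : Exp n) :
    varX k i s * mono k α = mono k (expOf n i s + α) := by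
  simp [varX, mono, AddMonoidAlgebra.ofCoeff_single]

lemma mono_mem_spanMon {A : Set (Exp n)} {α : Exp n} (hα : α ∈ A) :
    mono k α ∈ spanMon k A :=
  Submodule.subset_span ⟨α, hα, rfl⟩

lemma psiMono_eq (π : LaurentS n k →ₗ[k] LaurentS n k) (i : Fin n) (s : Bool) (m : Exp n) :
    psiMono π i s m = varX k i s * mono k m - Xop π i s (mono k m) := by
  simp [psiMono, Xop, varX_mul_mono]

lemma Xop_mono_mem_spanMon {π : LaurentS n k →ₗ[k] LaurentS n k} {B : Set (Exp n)}
    (hπ : IsProj π B) (i : Fin n) (s : Bool) {m : Exp n} (hm : m ∈ B) :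
    Xop π i s (mono k m) ∈ spanMon k B := by
  simpa [Xop, varX_mul_mono] using hπ.1 _ (mono_mem_spanMon (Or.inr ⟨i, s, m, hm, rfl⟩))

lemma partial1_single (π : LaurentS n k →ₗ[k] LaurentS n k) (B : Set (Exp n))
    (q : GoodIdx n B) (c : LaurentS n k) :
    partial1 π B (Finsupp.single q c) = c * psiMono π q.1.1.1 q.1.1.2 q.1.2 := by
  simp [partial1, LinearMap.toSpanSingleton, smul_eq_mul]

/-- The convention `Y_i[m] = 0` for `x_i m ∈ B` is harmless because then `ψ_i(m) = 0`. -/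
lemma partial1_Ysym {π : LaurentS n k →ₗ[k] LaurentS n k} {B : Set (Exp n)}
    (hπ : IsProj π B) (i : Fin n) (s : Bool) {m : Exp n} (hm : m ∈ B) :
    partial1 π B (Ysym k B i s m) = psiMono π i s m := by
  unfold Ysym
  split_ifs with h
  · exact (partial1_single π B ⟨((i, s), m), h⟩ 1).trans (one_mul _)
  · have hxm : expOf n i s + m ∈ B := by
      by_contra hc
      exact h ⟨hm, hc⟩
    simp [psiMono, hπ.2 _ (mono_mem_spanMon hxm)]

lemma YsymL_mono (B : Set (Exp n)) (i : Fin n) (s : Bool) (α : Exp n) :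
    YsymL k B i s (mono k α) = Ysym k B i s α := by
  unfold YsymL
  rw [show (mono k α : LaurentS n k).coeff = Finsupp.single α 1 from rfl,
    Finsupp.sum_single_index (by simp), one_smul]

lemma YsymL_add (B : Set (Exp n)) (i : Fin n) (s : Bool) (x y : LaurentS n k) :
    YsymL k B i s (x + y) = YsymL k B i s x + YsymL k B i s y := by
  unfold YsymL
  rw [AddMonoidAlgebra.coeff_add]
  exact Finsupp.sum_add_index (by simp) (fun _ _ _ _ => add_smul _ _ _)

lemma YsymL_smul (B : Set (Exp n)) (i : Fin n) (s : Bool) (c : k) (x : LaurentS n k) :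
    YsymL k B i s (c • x) = c • YsymL k B i s x := by
  unfold YsymL
  rw [show (c • x : LaurentS n k).coeff = c • x.coeff from rfl,
    Finsupp.sum_smul_index (by simp), Finsupp.smul_sum]
  simp only [mul_smul]

lemma partial1_YsymL {π : LaurentS n k →ₗ[k] LaurentS n k} {B : Set (Exp n)}
    (hπ : IsProj π B) (i : Fin n) (s : Bool) {b : LaurentS n k} (hb : b ∈ spanMon k B) :
    partial1 π B (YsymL k B i s b) = varX k i s * b - Xop π i s b := by
  induction hb using Submodule.span_induction with
  | mem p hp =>
    obtain ⟨α, hα, rfl⟩ := hp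
    rw [YsymL_mono, partial1_Ysym hπ i s hα, psiMono_eq]
  | zero => simp [YsymL]
  | add x y _ _ ihx ihy =>
    rw [YsymL_add, map_add, ihx, ihy, map_add]
    ring
  | smul c x _ ihx =>
    rw [YsymL_smul, LinearMap.map_smul_of_tower, ihx, smul_sub, Algebra.mul_smul_comm,
      map_smul]

lemma partial1_phiEl {π : LaurentS n k →ₗ[k] LaurentS n k} {B : Set (Exp n)}
    (hπ : IsProj π B) (i : Fin n) (s : Bool) (j : Fin n) (t : Bool) {m : Exp n} (hm : m ∈ B) :
    partial1 π B (phiEl π B i s j t m) =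
      Xop π j t (Xop π i s (mono k m)) - Xop π i s (Xop π j t (mono k m)) := by
  rw [phiEl, map_add, map_sub, map_sub, map_smul, map_smul,
    partial1_Ysym hπ j t hm, partial1_Ysym hπ i s hm,
    partial1_YsymL hπ j t (Xop_mono_mem_spanMon hπ i s hm),
    partial1_YsymL hπ i s (Xop_mono_mem_spanMon hπ j t hm),
    psiMono_eq, psiMono_eq, smul_eq_mul, smul_eq_mul]
  ring

end

theorem statement_12_general {n : ℕ} {k : Type*} [Field k]
    (B : Set (Exp n))
    (π : LaurentS n k →ₗ[k] LaurentS n k) (hπ : IsProj π B)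
    (hcomm : CommRelAll π B) :
    ∀ (i : Fin n) (s : Bool) (j : Fin n) (t : Bool),
      ((i, s) : Fin n × Bool) ≠ (j, t) → ∀ m ∈ B,
      partial1 π B (phiEl π B i s j t m) = 0 := by
  intro i s j t _ m hm
  rw [partial1_phiEl hπ i s j t hm, hcomm j t i s _ (mono_mem_spanMon hm), sub_self]

/-- For all `i ≠ j ∈ [−n,n]*` and `m ∈ B`, the element
`φ_{i,j}(m) = x_i Y_j[m] − x_j Y_i[m] − Y_j[X_i(m)] + Y_i[X_j(m)]` lies in `ker ∂₁`. -/
theorem statement_12 {n : ℕ} {k : Type*} [Field k]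
    (B : Set (Exp n)) (hBfin : B.Finite) (hB1 : ConnectedToOne B)
    (π : LaurentS n k →ₗ[k] LaurentS n k) (hπ : IsProj π B)
    (hcomm : CommRelAll π B) (hinv : InvRelAll π B) :
    ∀ (i : Fin n) (s : Bool) (j : Fin n) (t : Bool),
      ((i, s) : Fin n × Bool) ≠ (j, t) → ∀ m ∈ B,
      partial1 π B (phiEl π B i s j t m) = 0 :=
  statement_12_general B π hπ hcomm

end ToricBorderBasis
end
end
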